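/- Under the setting above, ∇Φ_{λ,μ} is Lipschitz continuous with constant η = (1/λ + 1/μ)(m + m³): ‖∇Φ_{λ,μ}(x) − ∇Φ_{λ,μ}(y)‖ ≤ (1/λ + 1/μ)(m + m³)‖x − y‖ for all x, y. -/

import Mathlib

/-!
The prox map `p` of a convex `g` in the metric of a symmetric `D` satisfies the variational
inequality `g (p x) ≤ g w + ⟪p x - x, D (w - p x)⟫ / λ`, obtained by comparing `p x` with the
points of the segment towards `w` and letting them approach `p x`. Adding it at `x` (with
`w = p y`) and at `y` (with `w = p x`) gives `⟪p x - p y, D (p x - p y)⟫ ≤ ⟪x - y, D (p x - p y)⟫`,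
so the spectral bounds `1/m ≤ D ≤ m` make `p` an `m²`-Lipschitz map. Hence `x ↦ D (x - p x)` is
`(m + m³)`-Lipschitz, and the gradient is a combination of two such maps with weights `1/λ`, `1/μ`.
-/

open Matrix

/-- The quadratic form `uᵀ D u` on Euclidean space, i.e. `‖u‖²_D`. -/
def quadD {n : ℕ} (D : Matrix (Fin n) (Fin n) ℝ) (u : EuclideanSpace ℝ (Fin n)) : ℝ :=
  (WithLp.equiv 2 (Fin n → ℝ) u) ⬝ᵥ D.mulVec (WithLp.equiv 2 (Fin n → ℝ) u)

/-- `D * u` as a vector of Euclidean space. -/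
noncomputable def mulVecE {n : ℕ} (D : Matrix (Fin n) (Fin n) ℝ)
    (u : EuclideanSpace ℝ (Fin n)) : EuclideanSpace ℝ (Fin n) :=
  (WithLp.equiv 2 (Fin n → ℝ)).symm (D.mulVec (WithLp.equiv 2 (Fin n → ℝ) u))

open Set Filter Topology
open scoped RealInnerProductSpace

namespace OrthonormalBasis

variable {ι E : Type*} [Fintype ι] [NormedAddCommGroup E] [InnerProductSpace ℝ E]
  (b : OrthonormalBasis ι ℝ E) {T : E →ₗ[ℝ] E} {μ : ι → ℝ}

theorem inner_apply_of_eigenbasis (hT : T.IsSymmetric) (hb : ∀ i, T (b i) = μ i • b i)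
    (u : E) (i : ι) : ⟪b i, T u⟫ = μ i * ⟪b i, u⟫ := by
  rw [← hT, hb, real_inner_smul_left]

theorem mul_norm_sq_le_inner_apply_of_eigenbasis (hT : T.IsSymmetric)
    (hb : ∀ i, T (b i) = μ i • b i) {c : ℝ} (hc : ∀ i, c ≤ μ i) (u : E) :
    c * ‖u‖ ^ 2 ≤ ⟪u, T u⟫ := by
  rw [← b.sum_sq_inner_right, ← b.sum_inner_mul_inner, Finset.mul_sum]
  refine Finset.sum_le_sum fun i _ => ?_
  rw [b.inner_apply_of_eigenbasis hT hb, real_inner_comm]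
  nlinarith [hc i, sq_nonneg ⟪b i, u⟫]

theorem norm_apply_le_of_eigenbasis (hT : T.IsSymmetric)
    (hb : ∀ i, T (b i) = μ i • b i) {M : ℝ} (hM : 0 ≤ M) (hμ : ∀ i, |μ i| ≤ M) (u : E) :
    ‖T u‖ ≤ M * ‖u‖ := by
  refine (pow_le_pow_iff_left₀ (norm_nonneg _) (by positivity) two_ne_zero).1 ?_
  rw [← b.sum_sq_inner_right, mul_pow, ← b.sum_sq_inner_right, Finset.mul_sum]
  gcongr with i
  rw [b.inner_apply_of_eigenbasis hT hb, mul_pow, ← sq_abs (μ i)]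
  gcongr
  exact hμ i

end OrthonormalBasis

theorem Matrix.IsHermitian.toEuclideanLin_eigenvectorBasis {n : Type*} [Fintype n]
    [DecidableEq n] {A : Matrix n n ℝ} (hA : A.IsHermitian) (i : n) :
    toEuclideanLin A (hA.eigenvectorBasis i) = hA.eigenvalues i • hA.eigenvectorBasis i := by
  ext1
  simp [hA.mulVec_eigenvectorBasis]

theorem nonneg_of_forall_Ioc_nonneg_add_mul {c d : ℝ}
    (h : ∀ t ∈ Ioc (0 : ℝ) 1, 0 ≤ c + t * d) : 0 ≤ c := by
  have hlim : Tendsto (fun t : ℝ => c + t * d) (𝓝[>] 0) (𝓝 c) := by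
    refine tendsto_nhdsWithin_of_tendsto_nhds ?_
    exact (by fun_prop : Continuous fun t : ℝ => c + t * d).tendsto' 0 c (by simp)
  exact ge_of_tendsto hlim (eventually_of_mem (Ioc_mem_nhdsGT one_pos) h)

section Prox

variable {E : Type*} [NormedAddCommGroup E] [InnerProductSpace ℝ E]

/-- `p = prox^T_{λg}` in the paper's notation, `λ` being `lam`. -/
def IsProxMap (T : E →ₗ[ℝ] E) (lam : ℝ) (g : E → ℝ) (p : E → E) : Prop :=
  ∀ x, IsMinOn (fun w => g w + ⟪w - x, T (w - x)⟫ / (2 * lam)) univ (p x)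

variable {T : E →ₗ[ℝ] E} {lam : ℝ} {g : E → ℝ} {p : E → E}

theorem IsProxMap.le_add_inner (hp : IsProxMap T lam g p) (hT : T.IsSymmetric)
    (hlam : 0 < lam) (hg : ConvexOn ℝ univ g) (x w : E) :
    g (p x) ≤ g w + ⟪p x - x, T (w - p x)⟫ / lam := by
  set a := p x - x
  set b := w - p x
  suffices 0 ≤ g w - g (p x) + ⟪a, T b⟫ / lam by linarith
  refine nonneg_of_forall_Ioc_nonneg_add_mul (d := ⟪b, T b⟫ / (2 * lam)) fun t ⟨ht0, ht1⟩ =>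
    (mul_nonneg_iff_of_pos_left ht0).1 ?_
  have hmin := isMinOn_univ_iff.1 (hp x) (p x + t • b)
  have hconv : g (p x + t • b) ≤ (1 - t) * g (p x) + t * g w := by
    have : p x + t • b = (1 - t) • p x + t • w := by simp only [b]; module
    rw [this]
    exact hg.2 (mem_univ _) (mem_univ _) (by linarith) ht0.le (by ring)
  have hexp : ⟪p x + t • b - x, T (p x + t • b - x)⟫ / (2 * lam) =
      ⟪a, T a⟫ / (2 * lam) + t * (⟪a, T b⟫ / lam + t * (⟪b, T b⟫ / (2 * lam))) := by
    have hba : ⟪b, T a⟫ = ⟪a, T b⟫ := by rw [← hT, real_inner_comm]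
    rw [show p x + t • b - x = a + t • b by simp only [a]; abel]
    simp only [map_add, map_smul, inner_add_left, inner_add_right, real_inner_smul_left,
      real_inner_smul_right, hba]
    field_simp
    ring
  rw [hexp] at hmin
  linarith

theorem IsProxMap.inner_sub_apply_sub_le (hp : IsProxMap T lam g p) (hT : T.IsSymmetric)
    (hlam : 0 < lam) (hg : ConvexOn ℝ univ g) (x y : E) :
    ⟪p x - p y, T (p x - p y)⟫ ≤ ⟪x - y, T (p x - p y)⟫ := by
  have hx := hp.le_add_inner hT hlam hg x (p y)
  have hy := hp.le_add_inner hT hlam hg y (p x)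
  rw [← neg_sub (p x) (p y), map_neg, inner_neg_right, neg_div] at hx
  have hres : 0 ≤ ⟪(p y - y) - (p x - x), T (p x - p y)⟫ := by
    have : 0 ≤ ⟪(p y - y) - (p x - x), T (p x - p y)⟫ / lam := by
      rw [inner_sub_left, sub_div]
      linarith
    simpa using (le_div_iff₀ hlam).1 this
  rw [show (p y - y) - (p x - x) = (x - y) - (p x - p y) by abel, inner_sub_left] at hres
  linarith

theorem IsProxMap.norm_sub_le_div_mul_norm_sub (hp : IsProxMap T lam g p) (hT : T.IsSymmetric)
    (hlam : 0 < lam) (hg : ConvexOn ℝ univ g) {c M : ℝ} (hc : 0 < c)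
    (hcoer : ∀ u, c * ‖u‖ ^ 2 ≤ ⟪u, T u⟫) (hbdd : ∀ u, ‖T u‖ ≤ M * ‖u‖) (x y : E) :
    ‖p x - p y‖ ≤ M / c * ‖x - y‖ := by
  set d := p x - p y
  have hsq : c * ‖d‖ ^ 2 ≤ M * ‖x - y‖ * ‖d‖ :=
    calc c * ‖d‖ ^ 2 ≤ ⟪d, T d⟫ := hcoer d
      _ ≤ ⟪x - y, T d⟫ := hp.inner_sub_apply_sub_le hT hlam hg x y
      _ ≤ ‖x - y‖ * ‖T d‖ := real_inner_le_norm _ _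
      _ ≤ M * ‖x - y‖ * ‖d‖ := by nlinarith [hbdd d, norm_nonneg (x - y)]
  have hMxy : 0 ≤ M * ‖x - y‖ := (norm_nonneg _).trans (hbdd (x - y))
  rw [div_mul_eq_mul_div, le_div_iff₀ hc]
  nlinarith [norm_nonneg d]

theorem IsProxMap.norm_toEuclideanLin_sub_sub_le {n : Type*} [Fintype n] [DecidableEq n]
    {D : Matrix n n ℝ} {g : EuclideanSpace ℝ n → ℝ} {p : EuclideanSpace ℝ n → EuclideanSpace ℝ n}
    {lam m : ℝ} (hp : IsProxMap (toEuclideanLin D) lam g p) (hD : D.IsHermitian) (hm : 0 < m)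
    (heig : ∀ i, hD.eigenvalues i ∈ Icc (1 / m) m) (hlam : 0 < lam) (hg : ConvexOn ℝ univ g)
    (x y : EuclideanSpace ℝ n) :
    ‖toEuclideanLin D ((x - p x) - (y - p y))‖ ≤ (m + m ^ 3) * ‖x - y‖ := by
  have hT := isSymmetric_toEuclideanLin_iff.mpr hD
  have hb := hD.toEuclideanLin_eigenvectorBasis
  have hbdd : ∀ u, ‖toEuclideanLin D u‖ ≤ m * ‖u‖ :=
    hD.eigenvectorBasis.norm_apply_le_of_eigenbasis hT hb hm.le fun i =>
      abs_le.2 ⟨by linarith [(heig i).1, one_div_pos.2 hm], (heig i).2⟩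
  have hlip := hp.norm_sub_le_div_mul_norm_sub hT hlam hg (one_div_pos.2 hm)
    (hD.eigenvectorBasis.mul_norm_sq_le_inner_apply_of_eigenbasis hT hb fun i => (heig i).1)
    hbdd x y
  calc ‖toEuclideanLin D ((x - p x) - (y - p y))‖ ≤ m * ‖(x - y) - (p x - p y)‖ := by
        rw [sub_sub_sub_comm]; exact hbdd _
    _ ≤ m * (‖x - y‖ + m / (1 / m) * ‖x - y‖) := by grw [norm_sub_le (x - y), hlip]
    _ = (m + m ^ 3) * ‖x - y‖ := by field_simp

end Prox

theorem quadD_eq_inner {n : ℕ} (D : Matrix (Fin n) (Fin n) ℝ) (u : EuclideanSpace ℝ (Fin n)) :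
    quadD D u = ⟪u, toEuclideanLin D u⟫ := by
  simp [quadD, PiLp.inner_apply, dotProduct, mul_comm]

theorem mulVecE_eq_toEuclideanLin {n : ℕ} (D : Matrix (Fin n) (Fin n) ℝ)
    (u : EuclideanSpace ℝ (Fin n)) : mulVecE D u = toEuclideanLin D u := rfl

theorem stmt_9 {n : ℕ} (m lam mu : ℝ) (hm : 1 ≤ m) (hlam : 0 < lam) (hmu : 0 < mu)
    (D₁ D₂ : Matrix (Fin n) (Fin n) ℝ) (hD₁ : D₁.PosDef) (hD₂ : D₂.PosDef)
    (heig₁ : ∀ i, hD₁.1.eigenvalues i ∈ Set.Icc (1/m) m)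
    (heig₂ : ∀ i, hD₂.1.eigenvalues i ∈ Set.Icc (1/m) m)
    (g f : EuclideanSpace ℝ (Fin n) → ℝ)
    (hg : ConvexOn ℝ Set.univ g) (hf : ConvexOn ℝ Set.univ f)
    (pg pf : EuclideanSpace ℝ (Fin n) → EuclideanSpace ℝ (Fin n))
    (hpg : ∀ x w, g (pg x) + quadD D₁ (pg x - x) / (2*lam)
            ≤ g w + quadD D₁ (w - x) / (2*lam))
    (hpf : ∀ x w, f (pf x) + quadD D₂ (pf x - x) / (2*mu)
            ≤ f w + quadD D₂ (w - x) / (2*mu))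
    (G : EuclideanSpace ℝ (Fin n) → EuclideanSpace ℝ (Fin n))
    (hG : ∀ x, G x = (1/lam) • mulVecE D₁ (x - pg x) - (1/mu) • mulVecE D₂ (x - pf x)) :
    ∀ x y, ‖G x - G y‖ ≤ (1/lam + 1/mu) * (m + m^3) * ‖x - y‖ := by
  intro x y
  have hm0 : 0 < m := by linarith
  have hprox₁ : IsProxMap (toEuclideanLin D₁) lam g pg := fun x =>
    isMinOn_univ_iff.2 fun w => by simpa only [quadD_eq_inner] using hpg x w
  have hprox₂ : IsProxMap (toEuclideanLin D₂) mu f pf := fun x =>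
    isMinOn_univ_iff.2 fun w => by simpa only [quadD_eq_inner] using hpf x w
  have hGsub : G x - G y = (1 / lam) • toEuclideanLin D₁ ((x - pg x) - (y - pg y))
      - (1 / mu) • toEuclideanLin D₂ ((x - pf x) - (y - pf y)) := by
    simp only [hG, mulVecE_eq_toEuclideanLin, map_sub, smul_sub]
    abel
  calc ‖G x - G y‖
      ≤ 1 / lam * ‖toEuclideanLin D₁ ((x - pg x) - (y - pg y))‖
        + 1 / mu * ‖toEuclideanLin D₂ ((x - pf x) - (y - pf y))‖ := by
        rw [hGsub]
        refine (norm_sub_le _ _).trans_eq ?_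
        rw [norm_smul, norm_smul, Real.norm_of_nonneg (by positivity),
          Real.norm_of_nonneg (by positivity)]
    _ ≤ 1 / lam * ((m + m ^ 3) * ‖x - y‖) + 1 / mu * ((m + m ^ 3) * ‖x - y‖) := by
        grw [hprox₁.norm_toEuclideanLin_sub_sub_le hD₁.1 hm0 heig₁ hlam hg,
          hprox₂.norm_toEuclideanLin_sub_sub_le hD₂.1 hm0 heig₂ hmu hf]
    _ = (1 / lam + 1 / mu) * (m + m ^ 3) * ‖x - y‖ := by ring
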